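/- For all real X and Y, the matrix identity X_Y · R · X_X · R · X_Y = X_{Y+X} · R · X_{−X} · R · X_{Y+X} holds. -/
import Mathlib


open Matrix Real

noncomputable def Xm (Z : ℝ) : Matrix (Fin 2) (Fin 2) ℝ :=
  !![0, -Real.exp (Z / 2); Real.exp (-Z / 2), 0]

def Rm : Matrix (Fin 2) (Fin 2) ℝ := !![1, 1; -1, 0]

theorem spiral_identity_R (X Y : ℝ) :
    Xm Y * Rm * Xm X * Rm * Xm Y = Xm (Y + X) * Rm * Xm (-X) * Rm * Xm (Y + X) := by
  simp only [Xm, Rm]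
  ext i j
  fin_cases i <;> fin_cases j <;>
    simp [Matrix.mul_apply, Fin.sum_univ_succ, ← Real.exp_add] <;> ring_nf <;>
    simp [← Real.exp_add] <;> ring_nf
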